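/- arXiv:1402.1599 — 2 statements merged into one kernel-verified Lean document; each statement's English description precedes it below -/
import Mathlib

section
/- Assume that for some γ > 0 the weighted system x_{k+1} = (1/γ)A_k x_k admits a strong nonuniform exponential dichotomy with invariant projector P and constants K ≥ 1, 0 < α < 1, ε ≥ 1 (α ε² < 1). Then for every l ∈ ℤ the stable fiber equals the image of the projector and the unstable fiber equals its kernel: S_γ(l) = im P_l, U_γ(l) = ker P_l, and consequently S_γ(l) ⊕ U_γ(l) = ℝ^N. -/
open Matrix

attribute [local instance] Matrix.linftyOpNormedAddCommGroup

abbrev Mat (N : ℕ) := Matrix (Fin N) (Fin N) ℝ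

noncomputable def fundSolNat {N : ℕ} (A : ℤ → GL (Fin N) ℝ) : ℕ → GL (Fin N) ℝ
  | 0 => 1
  | n + 1 => A (n : ℤ) * fundSolNat A n

noncomputable def fundSolNeg {N : ℕ} (A : ℤ → GL (Fin N) ℝ) : ℕ → GL (Fin N) ℝ
  | 0 => (A (-1))⁻¹
  | n + 1 => (A (Int.negSucc (n + 1)))⁻¹ * fundSolNeg A n

noncomputable def fundSol {N : ℕ} (A : ℤ → GL (Fin N) ℝ) : ℤ → GL (Fin N) ℝ
  | Int.ofNat n => fundSolNat A n
  | Int.negSucc n => fundSolNeg A n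

/-- The evolution operator `Φ(k,l)` of `x_{k+1} = A_k x_k`. -/
noncomputable def evol {N : ℕ} (A : ℤ → GL (Fin N) ℝ) (k l : ℤ) : Mat N :=
  ↑(fundSol A k * (fundSol A l)⁻¹)

def IsInvariantProjector {N : ℕ} (A : ℤ → GL (Fin N) ℝ) (P : ℤ → Mat N) : Prop :=
  (∀ k, P k * P k = P k) ∧ ∀ k, P (k + 1) * (A k : Mat N) = (A k : Mat N) * P k

/-- Evolution operator `Φ_γ(k,l) = γ^{-(k-l)} Φ(k,l)` of `x_{k+1} = (1/γ) A_k x_k`. -/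
noncomputable def evolW {N : ℕ} (A : ℤ → GL (Fin N) ℝ) (γ : ℝ) (k l : ℤ) : Mat N :=
  γ ^ (l - k) • evol A k l

def NEDWith {N : ℕ} (A : ℤ → GL (Fin N) ℝ) (γ : ℝ) (P : ℤ → Mat N) (K α ε : ℝ) : Prop :=
  IsInvariantProjector A P ∧ 1 ≤ K ∧ 0 < α ∧ α < 1 ∧ 1 ≤ ε ∧
    (∀ k l : ℤ, l ≤ k → ‖evolW A γ k l * P l‖ ≤ K * α ^ (k - l) * ε ^ l) ∧
    (∀ k l : ℤ, k ≤ l → ‖evolW A γ k l * (1 - P l)‖ ≤ K * (1 / α) ^ (k - l) * ε ^ l)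

def HasNED {N : ℕ} (A : ℤ → GL (Fin N) ℝ) (γ : ℝ) : Prop :=
  ∃ P K α ε, NEDWith A γ P K α ε

def HasStrongNED {N : ℕ} (A : ℤ → GL (Fin N) ℝ) (γ : ℝ) : Prop :=
  ∃ P K α ε, NEDWith A γ P K α ε ∧ α * ε ^ 2 < 1

def HasED {N : ℕ} (A : ℤ → GL (Fin N) ℝ) (γ : ℝ) : Prop :=
  ∃ P K α, NEDWith A γ P K α 1

def SigmaNED {N : ℕ} (A : ℤ → GL (Fin N) ℝ) : Set ℝ := {γ | 0 < γ ∧ ¬ HasStrongNED A γ}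

def rhoNED {N : ℕ} (A : ℤ → GL (Fin N) ℝ) : Set ℝ := {γ | 0 < γ ∧ HasStrongNED A γ}

def SigmaED {N : ℕ} (A : ℤ → GL (Fin N) ℝ) : Set ℝ := {γ | 0 < γ ∧ ¬ HasED A γ}

def stableSet {N : ℕ} (A : ℤ → GL (Fin N) ℝ) (γ ε : ℝ) (l : ℤ) : Set (Fin N → ℝ) :=
  {ξ | ∃ C : ℝ, ∀ k : ℤ, l ≤ k → ‖(evol A k l).mulVec ξ‖ * γ ^ (-k) * ε ^ (-l) ≤ C}

def unstableSet {N : ℕ} (A : ℤ → GL (Fin N) ℝ) (γ ε : ℝ) (l : ℤ) : Set (Fin N → ℝ) :=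
  {ξ | ∃ C : ℝ, ∀ k : ℤ, k ≤ l → ‖(evol A k l).mulVec ξ‖ * γ ^ (-k) * ε ^ (-l) ≤ C}

/-!
The image of `P_l` lies in the stable fiber and its kernel in the unstable one directly by the
dichotomy estimates. Conversely, if `ξ ∈ S_γ(l)` then `(Id - P_l) ξ` is recovered from the
bounded orbit at time `k = l + n` by the backward unstable estimate, which gives
`‖(Id - P_l) ξ‖ ≤ C (α ε)^n`; this tends to `0` because `α ε ≤ α ε² < 1`. Symmetrically, for
`ξ ∈ U_γ(l)` running forward from `k = l - n` gives `‖P_l ξ‖ ≤ C (α / ε)^n → 0`.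
-/

open Filter Topology

theorem eq_zero_of_norm_le_mul_pow {E : Type*} [NormedAddCommGroup E] {v : E} {c r : ℝ}
    (hr₀ : 0 ≤ r) (hr₁ : r < 1) (h : ∀ n : ℕ, ‖v‖ ≤ c * r ^ n) : v = 0 := by
  have hlim : Tendsto (fun n : ℕ => c * r ^ n) atTop (𝓝 0) := by
    simpa using (tendsto_pow_atTop_nhds_zero_of_lt_one hr₀ hr₁).const_mul c
  exact norm_le_zero_iff.mp (ge_of_tendsto' hlim h)

theorem exists_forall_mul_le_iff {ι : Type*} (p : ι → Prop) (f : ι → ℝ) {c : ℝ} (hc : 0 < c) :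
    (∃ C, ∀ i, p i → f i * c ≤ C) ↔ ∃ C, ∀ i, p i → f i ≤ C := by
  constructor
  · rintro ⟨C, hC⟩
    exact ⟨C / c, fun i hi => (le_div_iff₀ hc).mpr (hC i hi)⟩
  · rintro ⟨C, hC⟩
    exact ⟨C * c, fun i hi => mul_le_mul_of_nonneg_right (hC i hi) hc.le⟩

theorem Matrix.norm_mulVec_le_of_mulVec_eq_self {m n : Type*} [Fintype m] [Fintype n]
    (M : Matrix m n ℝ) {Q : Matrix n n ℝ} {ξ : n → ℝ} (hξ : Q *ᵥ ξ = ξ) :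
    ‖M *ᵥ ξ‖ ≤ ‖M * Q‖ * ‖ξ‖ := by
  calc ‖M *ᵥ ξ‖ = ‖(M * Q) *ᵥ ξ‖ := by rw [← Matrix.mulVec_mulVec, hξ]
    _ ≤ ‖M * Q‖ * ‖ξ‖ := Matrix.linfty_opNorm_mulVec _ _

theorem Matrix.range_mulVec_inter_ker_of_isIdempotentElem {n : Type*} [Fintype n]
    {R : Type*} [CommRing R] {P : Matrix n n R} (hP : IsIdempotentElem P) :
    Set.range P.mulVec ∩ {ξ | P *ᵥ ξ = 0} = {0} := by
  ext ξ
  simp only [Set.mem_inter_iff, Set.mem_range, Set.mem_ofPred_eq, Set.mem_singleton_iff]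
  constructor
  · rintro ⟨⟨η, rfl⟩, hη⟩
    rwa [Matrix.mulVec_mulVec, hP.eq] at hη
  · rintro rfl
    exact ⟨⟨0, Matrix.mulVec_zero P⟩, Matrix.mulVec_zero P⟩

theorem Matrix.mulVec_sub_mulVec_self_of_isIdempotentElem {n : Type*} [Fintype n]
    {R : Type*} [CommRing R] {P : Matrix n n R} (hP : IsIdempotentElem P) (ξ : n → R) :
    P *ᵥ (ξ - P *ᵥ ξ) = 0 := by
  rw [Matrix.mulVec_sub, Matrix.mulVec_mulVec, hP.eq, sub_self]

section Evolution

variable {N : ℕ} {A : ℤ → GL (Fin N) ℝ}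

theorem fundSol_succ (A : ℤ → GL (Fin N) ℝ) (k : ℤ) :
    fundSol A (k + 1) = A k * fundSol A k := by
  cases k with
  | ofNat n => rfl
  | negSucc n =>
    cases n with
    | zero =>
      change (1 : GL (Fin N) ℝ) = A (-1) * (A (-1))⁻¹
      rw [mul_inv_cancel]
    | succ n =>
      rw [show Int.negSucc (n + 1) + 1 = Int.negSucc n by omega]
      change fundSolNeg A n = A (Int.negSucc (n + 1)) * ((A (Int.negSucc (n + 1)))⁻¹ * _)
      rw [mul_inv_cancel_left]

theorem evol_mul_evol (A : ℤ → GL (Fin N) ℝ) (k m l : ℤ) :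
    evol A k m * evol A m l = evol A k l := by
  rw [evol, evol, evol, ← Units.val_mul]
  group

theorem evol_self (A : ℤ → GL (Fin N) ℝ) (l : ℤ) : evol A l l = 1 := by
  rw [evol, mul_inv_cancel, Units.val_one]

theorem evolW_mul_evolW (A : ℤ → GL (Fin N) ℝ) {γ : ℝ} (hγ : γ ≠ 0) (k m l : ℤ) :
    evolW A γ k m * evolW A γ m l = evolW A γ k l := by
  rw [evolW, evolW, evolW, smul_mul_smul, evol_mul_evol, ← zpow_add₀ hγ]
  ring_nf

theorem evolW_self (A : ℤ → GL (Fin N) ℝ) (γ : ℝ) (l : ℤ) : evolW A γ l l = 1 := by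
  rw [evolW, evol_self, sub_self, zpow_zero, one_smul]

theorem norm_evol_mulVec_mul_zpow (A : ℤ → GL (Fin N) ℝ) {γ : ℝ} (hγ : 0 < γ) (k l : ℤ)
    (ξ : Fin N → ℝ) :
    ‖evol A k l *ᵥ ξ‖ * γ ^ (-k) = ‖evolW A γ k l *ᵥ ξ‖ * γ ^ (-l) := by
  rw [evolW, Matrix.smul_mulVec, norm_smul, Real.norm_of_nonneg (zpow_pos hγ _).le, mul_comm _ ‖_‖,
    mul_assoc, ← zpow_add₀ hγ.ne']
  ring_nf

namespace IsInvariantProjector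

variable {P : ℤ → Mat N}

theorem one_sub (hP : IsInvariantProjector A P) : IsInvariantProjector A (fun k => 1 - P k) :=
  ⟨fun k => (IsIdempotentElem.one_sub (hP.1 k)).eq,
    fun k => by rw [sub_mul, mul_sub, one_mul, mul_one, hP.2 k]⟩

theorem fundSol_inv_mul_mul_fundSol (hP : IsInvariantProjector A P) (k : ℤ) :
    (((fundSol A k)⁻¹ : GL (Fin N) ℝ) : Mat N) * P k * (fundSol A k : Mat N) = P 0 := by
  have step : ∀ j : ℤ,
      (((fundSol A (j + 1))⁻¹ : GL (Fin N) ℝ) : Mat N) * P (j + 1) * (fundSol A (j + 1) : Mat N) =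
        (((fundSol A j)⁻¹ : GL (Fin N) ℝ) : Mat N) * P j * (fundSol A j : Mat N) := fun j => by
    rw [fundSol_succ, _root_.mul_inv_rev, Units.val_mul, Units.val_mul, mul_assoc, ← mul_assoc (P _),
      hP.2 j, ← mul_assoc, mul_assoc _ (↑(A j)⁻¹ : Mat N), ← mul_assoc (↑(A j)⁻¹ : Mat N),
      Units.inv_mul, one_mul, mul_assoc]
  induction k using Int.induction_on with
  | zero => simp [fundSol, fundSolNat, mul_one]
  | succ k ih => rw [step, ih]
  | pred k ih => rw [← ih, ← step, sub_add_cancel]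

theorem mul_evol (hP : IsInvariantProjector A P) (k l : ℤ) :
    P k * evol A k l = evol A k l * P l := by
  have hk : P k * (fundSol A k : Mat N) = (fundSol A k : Mat N) * P 0 :=
    ((Units.eq_inv_mul_iff_mul_eq _).mp (by rw [← mul_assoc, hP.fundSol_inv_mul_mul_fundSol])).symm
  have hl : P 0 * (((fundSol A l)⁻¹ : GL (Fin N) ℝ) : Mat N) =
      (((fundSol A l)⁻¹ : GL (Fin N) ℝ) : Mat N) * P l := by
    rw [Units.mul_inv_eq_iff_eq_mul, hP.fundSol_inv_mul_mul_fundSol]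
  rw [evol, Units.val_mul, ← mul_assoc, hk, mul_assoc, hl, mul_assoc]

theorem mul_evolW (hP : IsInvariantProjector A P) (γ : ℝ) (k l : ℤ) :
    P k * evolW A γ k l = evolW A γ k l * P l := by
  rw [evolW, mul_smul_comm, smul_mul_assoc, hP.mul_evol]

theorem mulVec_eq_evolW_mul_mulVec (hP : IsInvariantProjector A P) {γ : ℝ} (hγ : γ ≠ 0)
    (k l : ℤ) (ξ : Fin N → ℝ) :
    P l *ᵥ ξ = (evolW A γ l k * P k) *ᵥ (evolW A γ k l *ᵥ ξ) := by
  rw [Matrix.mulVec_mulVec, mul_assoc, hP.mul_evolW, ← mul_assoc, evolW_mul_evolW A hγ,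
    evolW_self, one_mul]

end IsInvariantProjector

end Evolution

section Fibers

variable {N : ℕ} {A : ℤ → GL (Fin N) ℝ} {γ ε : ℝ} {l : ℤ} {ξ : Fin N → ℝ}

theorem mem_stableSet_iff (hγ : 0 < γ) (hε : 0 < ε) :
    ξ ∈ stableSet A γ ε l ↔ ∃ C, ∀ k, l ≤ k → ‖evolW A γ k l *ᵥ ξ‖ ≤ C := by
  simp only [stableSet, Set.mem_ofPred_eq, norm_evol_mulVec_mul_zpow A hγ, mul_assoc]
  exact exists_forall_mul_le_iff _ _ (by positivity)

theorem mem_unstableSet_iff (hγ : 0 < γ) (hε : 0 < ε) :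
    ξ ∈ unstableSet A γ ε l ↔ ∃ C, ∀ k, k ≤ l → ‖evolW A γ k l *ᵥ ξ‖ ≤ C := by
  simp only [unstableSet, Set.mem_ofPred_eq, norm_evol_mulVec_mul_zpow A hγ, mul_assoc]
  exact exists_forall_mul_le_iff _ _ (by positivity)

variable {P : ℤ → Mat N} {K α : ℝ}

theorem mem_stableSet_of_mulVec_eq_self (hγ : 0 < γ) (hε : 0 < ε) (hK : 0 ≤ K) (hα₀ : 0 < α)
    (hα₁ : α ≤ 1) (hS : ∀ k, l ≤ k → ‖evolW A γ k l * P l‖ ≤ K * α ^ (k - l) * ε ^ l)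
    (hξ : P l *ᵥ ξ = ξ) : ξ ∈ stableSet A γ ε l := by
  refine (mem_stableSet_iff hγ hε).mpr ⟨K * ε ^ l * ‖ξ‖, fun k hk => ?_⟩
  have hpow : α ^ (k - l) ≤ 1 := zpow_le_one₀ hα₀ hα₁ (by omega)
  calc ‖evolW A γ k l *ᵥ ξ‖ ≤ ‖evolW A γ k l * P l‖ * ‖ξ‖ :=
        Matrix.norm_mulVec_le_of_mulVec_eq_self _ hξ
    _ ≤ K * α ^ (k - l) * ε ^ l * ‖ξ‖ := by gcongr; exact hS k hk
    _ ≤ K * 1 * ε ^ l * ‖ξ‖ := by gcongr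
    _ = K * ε ^ l * ‖ξ‖ := by rw [mul_one]

theorem mem_unstableSet_of_mulVec_eq_zero (hγ : 0 < γ) (hε : 0 < ε) (hK : 0 ≤ K)
    (hα₀ : 0 < α) (hα₁ : α ≤ 1)
    (hU : ∀ k, k ≤ l → ‖evolW A γ k l * (1 - P l)‖ ≤ K * (1 / α) ^ (k - l) * ε ^ l)
    (hξ : P l *ᵥ ξ = 0) : ξ ∈ unstableSet A γ ε l := by
  have hξ' : (1 - P l) *ᵥ ξ = ξ := by rw [Matrix.sub_mulVec, Matrix.one_mulVec, hξ, sub_zero]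
  refine (mem_unstableSet_iff hγ hε).mpr ⟨K * ε ^ l * ‖ξ‖, fun k hk => ?_⟩
  have hpow : (1 / α) ^ (k - l) ≤ 1 := by
    rw [one_div, _root_.inv_zpow', neg_sub]
    exact zpow_le_one₀ hα₀ hα₁ (by omega)
  calc ‖evolW A γ k l *ᵥ ξ‖ ≤ ‖evolW A γ k l * (1 - P l)‖ * ‖ξ‖ :=
        Matrix.norm_mulVec_le_of_mulVec_eq_self _ hξ'
    _ ≤ K * (1 / α) ^ (k - l) * ε ^ l * ‖ξ‖ := by gcongr; exact hU k hk
    _ ≤ K * 1 * ε ^ l * ‖ξ‖ := by gcongr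
    _ = K * ε ^ l * ‖ξ‖ := by rw [mul_one]

theorem mulVec_eq_self_of_mem_stableSet (hP : IsInvariantProjector A P) (hγ : 0 < γ)
    (hε : 0 < ε) (hα₀ : 0 ≤ α) (hαε : α * ε < 1)
    (hU : ∀ k, l ≤ k → ‖evolW A γ l k * (1 - P k)‖ ≤ K * (1 / α) ^ (l - k) * ε ^ k)
    (hξ : ξ ∈ stableSet A γ ε l) : P l *ᵥ ξ = ξ := by
  obtain ⟨C, hC⟩ := (mem_stableSet_iff hγ hε).mp hξ
  suffices (1 - P l) *ᵥ ξ = 0 by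
    rwa [Matrix.sub_mulVec, Matrix.one_mulVec, sub_eq_zero, eq_comm] at this
  refine eq_zero_of_norm_le_mul_pow (c := K * C * ε ^ l) (by positivity) hαε fun n => ?_
  have hk : l ≤ l + n := by omega
  have hbound := hU (l + n) hk
  calc ‖(1 - P l) *ᵥ ξ‖
        = ‖(evolW A γ l (l + n) * (1 - P (l + n))) *ᵥ (evolW A γ (l + n) l *ᵥ ξ)‖ := by
          rw [hP.one_sub.mulVec_eq_evolW_mul_mulVec hγ.ne']
    _ ≤ ‖evolW A γ l (l + n) * (1 - P (l + n))‖ * ‖evolW A γ (l + n) l *ᵥ ξ‖ :=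
          Matrix.linfty_opNorm_mulVec _ _
    _ ≤ K * (1 / α) ^ (l - (l + n)) * ε ^ (l + n) * C :=
          mul_le_mul hbound (hC _ hk) (norm_nonneg _) ((norm_nonneg _).trans hbound)
    _ = K * C * ε ^ l * (α * ε) ^ n := by
          rw [one_div, _root_.inv_zpow', zpow_add₀ hε.ne', mul_pow]
          simp only [sub_add_cancel_left, neg_neg, zpow_natCast]
          ring

theorem mulVec_eq_zero_of_mem_unstableSet (hP : IsInvariantProjector A P) (hγ : 0 < γ)
    (hε : 0 < ε) (hα₀ : 0 ≤ α) (hαε : α < ε)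
    (hS : ∀ k, k ≤ l → ‖evolW A γ l k * P k‖ ≤ K * α ^ (l - k) * ε ^ k)
    (hξ : ξ ∈ unstableSet A γ ε l) : P l *ᵥ ξ = 0 := by
  obtain ⟨C, hC⟩ := (mem_unstableSet_iff hγ hε).mp hξ
  refine eq_zero_of_norm_le_mul_pow (c := K * C * ε ^ l) (by positivity)
    ((div_lt_one hε).mpr hαε) fun n => ?_
  have hk : l - n ≤ l := by omega
  have hbound := hS (l - n) hk
  calc ‖P l *ᵥ ξ‖
        = ‖(evolW A γ l (l - n) * P (l - n)) *ᵥ (evolW A γ (l - n) l *ᵥ ξ)‖ := by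
          rw [hP.mulVec_eq_evolW_mul_mulVec hγ.ne']
    _ ≤ ‖evolW A γ l (l - n) * P (l - n)‖ * ‖evolW A γ (l - n) l *ᵥ ξ‖ :=
          Matrix.linfty_opNorm_mulVec _ _
    _ ≤ K * α ^ (l - (l - n)) * ε ^ (l - n) * C :=
          mul_le_mul hbound (hC _ hk) (norm_nonneg _) ((norm_nonneg _).trans hbound)
    _ = K * C * ε ^ l * (α / ε) ^ n := by
          rw [zpow_sub₀ hε.ne', div_pow, sub_sub_cancel, zpow_natCast, zpow_natCast]
          field_simp

end Fibers

/-- If the weighted system `x_{k+1} = (1/γ) A_k x_k` admits a strong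
nonuniform exponential dichotomy with invariant projector `P` and constants
`K ≥ 1`, `0 < α < 1`, `ε ≥ 1`, `α ε² < 1`, then for every `l` the stable fiber is the
image of `P_l`, the unstable fiber is the kernel of `P_l`, and together they
decompose `ℝ^N` as a direct sum. -/
theorem stable_unstable_fibers_of_strongNED {N : ℕ} (A : ℤ → GL (Fin N) ℝ)
    (γ : ℝ) (hγ : 0 < γ) (P : ℤ → Mat N) (K α ε : ℝ)
    (hNED : NEDWith A γ P K α ε) (hstrong : α * ε ^ 2 < 1) :
    (∀ l : ℤ, stableSet A γ ε l = Set.range (P l).mulVec) ∧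
    (∀ l : ℤ, unstableSet A γ ε l = {ξ : Fin N → ℝ | (P l).mulVec ξ = 0}) ∧
    (∀ l : ℤ, stableSet A γ ε l ∩ unstableSet A γ ε l = {0}) ∧
    (∀ l : ℤ, ∀ ξ : Fin N → ℝ, ∃ x ∈ stableSet A γ ε l, ∃ y ∈ unstableSet A γ ε l,
      ξ = x + y) := by
  obtain ⟨hP, hK, hα₀, hα₁, hε, hS, hU⟩ := hNED
  have hε₀ : 0 < ε := one_pos.trans_le hε
  have hαε : α * ε < 1 := by nlinarith
  have hstable : ∀ l, stableSet A γ ε l = Set.range (P l).mulVec := fun l => by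
    ext ξ
    refine ⟨fun h => ⟨ξ, mulVec_eq_self_of_mem_stableSet hP hγ hε₀ hα₀.le hαε (hU l) h⟩, ?_⟩
    rintro ⟨η, rfl⟩
    refine mem_stableSet_of_mulVec_eq_self hγ hε₀ (by linarith) hα₀ hα₁.le
      (fun k hk => hS k l hk) ?_
    rw [Matrix.mulVec_mulVec, hP.1 l]
  have hunstable : ∀ l, unstableSet A γ ε l = {ξ : Fin N → ℝ | (P l).mulVec ξ = 0} :=
    fun l => Set.ext fun _ =>
      ⟨mulVec_eq_zero_of_mem_unstableSet hP hγ hε₀ hα₀.le (hα₁.trans_le hε) (hS l),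
        mem_unstableSet_of_mulVec_eq_zero hγ hε₀ (by linarith) hα₀ hα₁.le fun k hk => hU k l hk⟩
  refine ⟨hstable, hunstable, fun l => ?_, fun l ξ => ?_⟩
  · rw [hstable, hunstable]
    exact Matrix.range_mulVec_inter_ker_of_isIdempotentElem (hP.1 l)
  · rw [hstable, hunstable]
    exact ⟨P l *ᵥ ξ, Set.mem_range_self ξ, ξ - P l *ᵥ ξ,
      Matrix.mulVec_sub_mulVec_self_of_isIdempotentElem (hP.1 l) ξ, (add_sub_cancel _ _).symm⟩
end

section
/- The nonuniform dichotomy spectrum Σ_NED(A) is a closed subset of (0,∞). -/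
open Matrix

attribute [local instance] Matrix.linftyOpNormedAddCommGroup

attribute [local instance] Matrix.linftyOpNormedSpace

private lemma zpow_le_zpow_aux {a b : ℝ} (ha : 0 ≤ a) (hab : a ≤ b) {n : ℤ}
    (hn : 0 ≤ n) : a ^ n ≤ b ^ n := by
  obtain ⟨m, rfl⟩ := Int.eq_ofNat_of_zero_le hn
  rw [zpow_natCast, zpow_natCast]
  exact pow_le_pow_left₀ ha hab m

private lemma one_div_zpow_sub (a : ℝ) (k l : ℤ) : (1 / a) ^ (k - l) = a ^ (l - k) := by
  rw [one_div, _root_.inv_zpow, ← _root_.zpow_neg, neg_sub]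

private lemma evolW_scale {N : ℕ} (A : ℤ → GL (Fin N) ℝ) {γ γ₀ : ℝ} (hγ : γ ≠ 0)
    (hγ₀ : γ₀ ≠ 0) (k l : ℤ) :
    evolW A γ k l = (γ / γ₀) ^ (l - k) • evolW A γ₀ k l := by
  unfold evolW
  rw [smul_smul, div_zpow, div_mul_cancel₀]
  exact zpow_ne_zero _ hγ₀

private lemma strongNED_open {N : ℕ} (A : ℤ → GL (Fin N) ℝ) {γ γ₀ : ℝ}
    (hγ : 0 < γ) (hγ₀ : 0 < γ₀) (h : HasStrongNED A γ₀)
    (P : ℤ → Mat N) (K α ε : ℝ) (hned : NEDWith A γ₀ P K α ε) (hstr : α * ε ^ 2 < 1)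
    (h1 : γ₀ / γ < 1 / (α * ε ^ 2)) (h2 : γ / γ₀ < 1 / (α * ε ^ 2)) :
    HasStrongNED A γ := by
  obtain ⟨hP, hK, hα, hα1, hε, hs, hu⟩ := hned
  have hε0 : (0:ℝ) < ε := lt_of_lt_of_le one_pos hε
  have hαε : 0 < α * ε ^ 2 := by positivity
  set M : ℝ := max (γ₀ / γ) (γ / γ₀) with hM
  have hM1 : 1 ≤ M := by
    rcases le_total γ γ₀ with hle | hle
    · exact le_trans ((one_le_div hγ).2 hle) (le_max_left _ _)
    · exact le_trans ((one_le_div hγ₀).2 hle) (le_max_right _ _)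
  have hMlt : M < 1 / (α * ε ^ 2) := max_lt h1 h2
  set α' : ℝ := α * M with hα'
  have hα'0 : 0 < α' := mul_pos hα (lt_of_lt_of_le one_pos hM1)
  have hα'ε : α' * ε ^ 2 < 1 := by
    have : α * M * ε ^ 2 = (α * ε ^ 2) * M := by ring
    rw [hα', this]
    calc (α * ε ^ 2) * M < (α * ε ^ 2) * (1 / (α * ε ^ 2)) :=
      (mul_lt_mul_iff_right₀ hαε).2 hMlt
    _ = 1 := by field_simp
  have hα'1 : α' < 1 := by
    have hε2 : 1 ≤ ε ^ 2 := one_le_pow₀ hε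
    calc α' = α' * 1 := (mul_one _).symm
    _ ≤ α' * ε ^ 2 := by nlinarith
    _ < 1 := hα'ε
  refine ⟨P, K, α', ε, ⟨hP, hK, hα'0, hα'1, hε, ?_, ?_⟩, hα'ε⟩
  · intro k l hlk
    have key : evolW A γ k l * P l = (γ / γ₀) ^ (l - k) • (evolW A γ₀ k l * P l) := by
      rw [evolW_scale A hγ.ne' hγ₀.ne' k l, smul_mul_assoc]
    rw [key, norm_smul, Real.norm_eq_abs, abs_of_pos (zpow_pos (div_pos hγ hγ₀) _)]
    have hb1 : (γ / γ₀) ^ (l - k) * (K * α ^ (k - l) * ε ^ l)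
        = K * ((γ₀ / γ) * α) ^ (k - l) * ε ^ l := by
      rw [mul_zpow]
      have : (γ₀ / γ) ^ (k - l) = (γ / γ₀) ^ (l - k) := by
        rw [show (k - l) = -(l - k) by ring, _root_.zpow_neg, ← _root_.inv_zpow, inv_div]
      rw [this]; ring
    have step1 : (γ / γ₀) ^ (l - k) * ‖evolW A γ₀ k l * P l‖
        ≤ K * ((γ₀ / γ) * α) ^ (k - l) * ε ^ l := by
      rw [← hb1]
      exact mul_le_mul_of_nonneg_left (hs k l hlk)
        (zpow_nonneg (div_pos hγ hγ₀).le _)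
    refine le_trans step1 ?_
    have hbase : (γ₀ / γ) * α ≤ α' := by
      rw [hα', mul_comm]
      exact mul_le_mul_of_nonneg_left (le_max_left _ _) hα.le
    have := zpow_le_zpow_aux (by positivity : (0:ℝ) ≤ (γ₀ / γ) * α) hbase
      (by omega : (0:ℤ) ≤ k - l)
    have hKε : 0 ≤ K * ε ^ l := by positivity
    calc K * ((γ₀ / γ) * α) ^ (k - l) * ε ^ l
        = (K * ε ^ l) * ((γ₀ / γ) * α) ^ (k - l) := by ring
      _ ≤ (K * ε ^ l) * α' ^ (k - l) := mul_le_mul_of_nonneg_left this hKε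
      _ = K * α' ^ (k - l) * ε ^ l := by ring
  · intro k l hkl
    have key : evolW A γ k l * (1 - P l)
        = (γ / γ₀) ^ (l - k) • (evolW A γ₀ k l * (1 - P l)) := by
      rw [evolW_scale A hγ.ne' hγ₀.ne' k l, smul_mul_assoc]
    rw [key, norm_smul, Real.norm_eq_abs, abs_of_pos (zpow_pos (div_pos hγ hγ₀) _)]
    have hb1 : (γ / γ₀) ^ (l - k) * (K * (1 / α) ^ (k - l) * ε ^ l)
        = K * (1 / ((γ / γ₀) * α)) ^ (k - l) * ε ^ l := by
      rw [one_div_zpow_sub, one_div_zpow_sub, mul_zpow]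
      ring
    have step1 : (γ / γ₀) ^ (l - k) * ‖evolW A γ₀ k l * (1 - P l)‖
        ≤ K * (1 / ((γ / γ₀) * α)) ^ (k - l) * ε ^ l := by
      rw [← hb1]
      exact mul_le_mul_of_nonneg_left (hu k l hkl)
        (zpow_nonneg (div_pos hγ hγ₀).le _)
    refine le_trans step1 ?_
    have hbase : (γ / γ₀) * α ≤ α' := by
      rw [hα', mul_comm]
      exact mul_le_mul_of_nonneg_left (le_max_right _ _) hα.le
    have hrw1 : (1 / ((γ / γ₀) * α)) ^ (k - l) = ((γ / γ₀) * α) ^ (l - k) :=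
      one_div_zpow_sub _ k l
    have hrw2 : (1 / α') ^ (k - l) = α' ^ (l - k) := one_div_zpow_sub _ k l
    have := zpow_le_zpow_aux (by positivity : (0:ℝ) ≤ (γ / γ₀) * α) hbase
      (by omega : (0:ℤ) ≤ l - k)
    have hKε : 0 ≤ K * ε ^ l := by positivity
    calc K * (1 / ((γ / γ₀) * α)) ^ (k - l) * ε ^ l
        = (K * ε ^ l) * ((γ / γ₀) * α) ^ (l - k) := by rw [hrw1]; ring
      _ ≤ (K * ε ^ l) * α' ^ (l - k) := mul_le_mul_of_nonneg_left this hKε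
      _ = K * (1 / α') ^ (k - l) * ε ^ l := by rw [hrw2]; ring

/-- The nonuniform dichotomy spectrum `Σ_NED(A)` is a closed
subset of `(0,∞)`. -/
theorem sigmaNED_isClosed {N : ℕ} (A : ℤ → GL (Fin N) ℝ) :
    IsClosed {γ : Set.Ioi (0 : ℝ) | (γ : ℝ) ∈ SigmaNED A} := by
  rw [← isOpen_compl_iff]
  have hset : {γ : Set.Ioi (0 : ℝ) | (γ : ℝ) ∈ SigmaNED A}ᶜ
      = (Subtype.val) ⁻¹' {γ : ℝ | 0 < γ ∧ HasStrongNED A γ} := by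
    ext ⟨γ, hγ⟩
    simp only [Set.mem_compl_iff, Set.mem_setOf_eq, Set.mem_preimage, SigmaNED]
    have : (0:ℝ) < γ := hγ
    tauto
  rw [hset]
  refine (Metric.isOpen_iff.2 ?_).preimage continuous_subtype_val
  rintro γ₀ ⟨hγ₀, hstrong⟩
  obtain ⟨P, K, α, ε, hned, hstr⟩ := hstrong
  obtain ⟨hP, hK, hα, hα1, hε, hs, hu⟩ := hned
  have hε0 : (0:ℝ) < ε := lt_of_lt_of_le one_pos hε
  have hαε : 0 < α * ε ^ 2 := by positivity
  set t : ℝ := 1 / (α * ε ^ 2) with ht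
  have ht1 : 1 < t := (one_lt_div hαε).2 hstr
  have ht0 : 0 < t := lt_trans one_pos ht1
  refine ⟨γ₀ * (t - 1) / t, div_pos (mul_pos hγ₀ (by linarith)) ht0, ?_⟩
  intro γ hγmem
  rw [Metric.mem_ball, Real.dist_eq] at hγmem
  have habs := abs_lt.1 hγmem
  have hlo : γ₀ / t < γ := by
    have h' : γ₀ - γ₀ * (t - 1) / t = γ₀ / t := by field_simp; ring
    nlinarith [habs.1]
  have hhi : γ < γ₀ * t := by
    have : γ < γ₀ + γ₀ * (t - 1) / t := by linarith [habs.2]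
    have h2 : γ₀ * (t - 1) / t ≤ γ₀ * (t - 1) := by
      rw [div_le_iff₀ ht0]
      nlinarith [mul_nonneg (mul_nonneg hγ₀.le (by linarith : (0:ℝ) ≤ t-1)) (by linarith : (0:ℝ) ≤ t-1)]
    nlinarith
  have hγpos : 0 < γ := lt_trans (by positivity) hlo
  refine ⟨hγpos, ?_⟩
  refine strongNED_open A hγpos hγ₀ ⟨P, K, α, ε, ⟨hP, hK, hα, hα1, hε, hs, hu⟩, hstr⟩
    P K α ε ⟨hP, hK, hα, hα1, hε, hs, hu⟩ hstr ?_ ?_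
  · rw [← ht, div_lt_iff₀ hγpos]
    calc γ₀ = (γ₀ / t) * t := by field_simp
    _ < γ * t := by exact mul_lt_mul_of_pos_right hlo ht0
    _ = t * γ := mul_comm _ _
  · rw [← ht, div_lt_iff₀ hγ₀]
    nlinarith
end
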